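/- If \phi: F_2[x_1,...,x_n] \to F_2[x_1,...,x_m] preserves neural ideals, then for every pseudomonomial f in F_2[x_1,...,x_m] there exists a pseudomonomial \hat{f} in F_2[x_1,...,x_n] with \phi(\hat{f}) = f; consequently for every neural ideal J_D in F_2[x_1,...,x_m] there is a neural ideal J_C in F_2[x_1,...,x_n] with \phi(J_C) = J_D. -/

import Mathlib

open MvPolynomial

/-- The pseudomonomial with positive part `σ` and negative part `τ`. -/
noncomputable def pm {n : ℕ} (σ τ : Finset (Fin n)) : MvPolynomial (Fin n) (ZMod 2) :=
  (∏ i ∈ σ, X i) * ∏ j ∈ τ, (1 - X j)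

/-- A polynomial is a pseudomonomial if it is `pm σ τ` for disjoint `σ τ`. -/
def IsPseudomonomial {n : ℕ} (f : MvPolynomial (Fin n) (ZMod 2)) : Prop :=
  ∃ σ τ : Finset (Fin n), Disjoint σ τ ∧ f = pm σ τ

/-- The indicator pseudomonomial `ρ_v` of a vector `v ∈ F₂ⁿ`. -/
noncomputable def indicatorPM {n : ℕ} (v : Fin n → ZMod 2) : MvPolynomial (Fin n) (ZMod 2) :=
  pm (Finset.univ.filter fun i => v i = 1) (Finset.univ.filter fun i => ¬ v i = 1)

/-- The neural ideal of a code `C ⊆ F₂ⁿ`. -/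
noncomputable def neuralIdeal {n : ℕ} (C : Set (Fin n → ZMod 2)) :
    Ideal (MvPolynomial (Fin n) (ZMod 2)) :=
  Ideal.span (indicatorPM '' {v | v ∉ C})

/-- A ring homomorphism preserves neural ideals if the image of every neural ideal
is a neural ideal. -/
def PreservesNeuralIdeals {n m : ℕ}
    (φ : MvPolynomial (Fin n) (ZMod 2) →+* MvPolynomial (Fin m) (ZMod 2)) : Prop :=
  ∀ C : Set (Fin n → ZMod 2), ∃ D : Set (Fin m → ZMod 2),
    φ '' (neuralIdeal C : Set (MvPolynomial (Fin n) (ZMod 2))) =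
      (neuralIdeal D : Set (MvPolynomial (Fin m) (ZMod 2)))

/-- The bit flip homomorphism `δ_i`. -/
noncomputable def bitFlip {n : ℕ} (i : Fin n) :
    MvPolynomial (Fin n) (ZMod 2) →ₐ[ZMod 2] MvPolynomial (Fin n) (ZMod 2) :=
  aeval (fun j => if j = i then 1 - X j else X j)

/-- The restriction map `ω_{m,m'} : F₂[x₁,…,xₙ] → F₂[x₁,…,x_m]`. -/
noncomputable def restrictionMap (n m m' : ℕ) :
    MvPolynomial (Fin n) (ZMod 2) →ₐ[ZMod 2] MvPolynomial (Fin m) (ZMod 2) :=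
  aeval (fun i : Fin n => if h : (i : ℕ) < m then X (⟨i, h⟩ : Fin m)
    else if (i : ℕ) < m' then 0 else 1)

/-!
The image of `J_∅ = ⟨1⟩` is a neural ideal containing `1`, so `φ` is surjective. For a
pseudomonomial `p`, `⟨p⟩` is neural, hence so is `⟨φ p⟩ = φ(⟨p⟩)`; when `φ p ≠ 0` it
divides some indicator `ρ_w`, a product of the primes `x_j`, `1 - x_j` of `F₂[x]`, whose only
unit is `1`, so `φ p` is itself a pseudomonomial. Applied to `x_i` and `1 - x_i` this makes
`φ x_i` either `0`, `1` or a literal `x_j`, `1 - x_j`, because a pseudomonomial whose complement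
is one as well is a literal. Surjectivity forces every target variable to occur, so every
pseudomonomial lifts to a product of literals. Finally every ideal generated by
pseudomonomials is the neural ideal of their common zero set, and lifting the generators of
`J_D` gives the ideal statement.
-/

open Finset

section Literals

variable {R S : Type*} [CommRing R] [CommRing S]

lemma exists_literal_map_eq (φ : R →+* S) {x : R} {y : S} (h : φ x = y ∨ φ x = 1 - y)
    (b : Prop) [Decidable b] : ∃ ℓ, (ℓ = x ∨ ℓ = 1 - x) ∧ φ ℓ = if b then y else 1 - y := by
  rcases h with h | h <;> by_cases hb : b
  · exact ⟨x, .inl rfl, by simp [hb, h]⟩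
  · exact ⟨1 - x, .inr rfl, by simp [hb, h]⟩
  · exact ⟨1 - x, .inr rfl, by simp [hb, h]⟩
  · exact ⟨x, .inl rfl, by simp [hb, h]⟩

lemma MvPolynomial.X_ne_one_sub_X {σ : Type*} [Nontrivial R] (i j : σ) :
    (X i : MvPolynomial σ R) ≠ 1 - X j := fun h => by
  simpa using congrArg (eval 0) h

lemma MvPolynomial.eq_of_eq_X_or_eq_one_sub_X {σ : Type*} [Nontrivial R] {p : MvPolynomial σ R}
    {i j : σ} (hi : p = X i ∨ p = 1 - X i) (hj : p = X j ∨ p = 1 - X j) : i = j := by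
  rcases hi with rfl | rfl <;> rcases hj with h | h
  · exact X_injective h
  · exact absurd h (X_ne_one_sub_X i j)
  · exact absurd h.symm (X_ne_one_sub_X j i)
  · exact X_injective (sub_right_injective h)

end Literals

theorem exists_subset_associated_of_dvd_prod {M ι : Type*} [CommMonoidWithZero M]
    [IsCancelMulZero M] {f : ι → M} {s : Finset ι} (hf : ∀ i ∈ s, Prime (f i)) {g : M}
    (hg : g ∣ ∏ i ∈ s, f i) : ∃ t ⊆ s, Associated g (∏ i ∈ t, f i) := by
  classical
  induction s using Finset.induction_on generalizing g with
  | empty =>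
    exact ⟨∅, subset_refl _, by simpa [associated_one_iff_isUnit] using isUnit_of_dvd_one hg⟩
  | insert a s ha ih =>
    rw [prod_insert ha] at hg
    have hfa : Prime (f a) := hf a (mem_insert_self a s)
    have hfs : ∀ i ∈ s, Prime (f i) := fun i hi => hf i (mem_insert_of_mem hi)
    rcases hfa.left_dvd_or_dvd_right_of_dvd_mul hg with ⟨g', rfl⟩ | hgs
    · obtain ⟨t, hts, ht⟩ := ih hfs ((mul_dvd_mul_iff_left hfa.ne_zero).1 hg)
      refine ⟨insert a t, insert_subset_insert a hts, ?_⟩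
      rw [prod_insert fun h => ha (hts h)]
      exact ht.mul_left _
    · obtain ⟨t, hts, ht⟩ := ih hfs hgs
      exact ⟨t, hts.trans (subset_insert a s), ht⟩

instance {σ : Type*} : Subsingleton (MvPolynomial σ (ZMod 2))ˣ := by
  refine ⟨fun u v => Units.ext ?_⟩
  have units_eq_one : ∀ p : MvPolynomial σ (ZMod 2), IsUnit p → p = 1 := by
    intro p hp
    obtain ⟨r, hr, rfl⟩ := isUnit_iff_eq_C_of_isReduced.1 hp
    rw [(by decide : ∀ a : ZMod 2, IsUnit a → a = 1) r hr, map_one]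
  rw [units_eq_one _ u.isUnit, units_eq_one _ v.isUnit]

lemma Ideal.coe_map_of_surjective {R S : Type*} [Semiring R] [Semiring S] {f : R →+* S}
    (hf : Function.Surjective f) (I : Ideal R) : (I.map f : Set S) = f '' I :=
  Set.ext fun _ => Ideal.mem_map_iff_of_surjective f hf

section Pseudomonomial

variable {k : ℕ}

lemma bitFlip_X_self (i : Fin k) : bitFlip i (X i) = 1 - X i := by
  simp [bitFlip]

lemma bitFlip_comp_bitFlip (i : Fin k) : (bitFlip i).comp (bitFlip i) = AlgHom.id _ _ := by
  refine algHom_ext fun j => ?_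
  by_cases hj : j = i <;> simp [bitFlip, hj]

lemma prime_one_sub_X (i : Fin k) : Prime (1 - X i : MvPolynomial (Fin k) (ZMod 2)) := by
  let e := AlgEquiv.ofAlgHom _ _ (bitFlip_comp_bitFlip i) (bitFlip_comp_bitFlip i)
  have he : e (X i) = 1 - X i := bitFlip_X_self i
  exact he ▸ (MulEquiv.prime_iff e).2 X_prime

lemma pm_eq_prod {σ τ : Finset (Fin k)} (hd : Disjoint σ τ) :
    pm σ τ = ∏ i ∈ σ ∪ τ, if i ∈ σ then X i else 1 - X i := by
  rw [prod_union hd, prod_ite_of_true fun _ h => h,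
    prod_ite_of_false fun _ h h' => disjoint_left.1 hd h' h, pm]

lemma isPseudomonomial_prod {ι : Type*} {u : ι → Fin k} (hu : Function.Injective u) {A : Finset ι}
    {ℓ : ι → MvPolynomial (Fin k) (ZMod 2)} (hℓ : ∀ j ∈ A, ℓ j = X (u j) ∨ ℓ j = 1 - X (u j)) :
    IsPseudomonomial (∏ j ∈ A, ℓ j) := by
  classical
  refine ⟨(A.filter fun j => ℓ j = X (u j)).image u, (A.filter fun j => ℓ j ≠ X (u j)).image u,
    (disjoint_image hu).2 (disjoint_filter_filter_not _ _ _), ?_⟩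
  rw [pm, prod_image hu.injOn, prod_image hu.injOn,
    ← prod_filter_mul_prod_filter_not A fun j => ℓ j = X (u j)]
  congr 1 <;> refine prod_congr rfl fun j hj => ?_ <;> rw [mem_filter] at hj
  · exact hj.2
  · exact (hℓ j hj.1).resolve_left hj.2

lemma IsPseudomonomial.of_dvd {p g : MvPolynomial (Fin k) (ZMod 2)} (hp : IsPseudomonomial p)
    (hg : g ∣ p) : IsPseudomonomial g := by
  obtain ⟨σ, τ, hd, rfl⟩ := hp
  rw [pm_eq_prod hd] at hg
  obtain ⟨t, -, ht⟩ := exists_subset_associated_of_dvd_prod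
    (fun i _ => by split_ifs; exacts [X_prime, prime_one_sub_X i]) hg
  rw [associated_iff_eq.1 ht]
  exact isPseudomonomial_prod Function.injective_id fun i _ => by split_ifs <;> simp

lemma eval_pm_eq_one_iff {σ τ : Finset (Fin k)} {w : Fin k → ZMod 2} :
    eval w (pm σ τ) = 1 ↔ (∀ i ∈ σ, w i = 1) ∧ ∀ j ∈ τ, w j = 0 := by
  have one_iff : ∀ a : ZMod 2, a = 1 ↔ a ≠ 0 := by decide
  have zero_iff : ∀ a : ZMod 2, a = 0 ↔ 1 - a ≠ 0 := by decide
  simp only [one_iff, pm, map_mul, map_prod, map_sub, map_one, eval_X, mul_ne_zero_iff,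
    prod_ne_zero_iff]
  simp only [← one_iff, zero_iff]

lemma eval_pm_indicator {σ τ : Finset (Fin k)} (hd : Disjoint σ τ) :
    eval (fun i => if i ∈ σ then 1 else 0) (pm σ τ) = 1 :=
  eval_pm_eq_one_iff.2 ⟨fun _ hi => if_pos hi, fun _ hj => if_neg (disjoint_right.1 hd hj)⟩

lemma pm_ne_zero {σ τ : Finset (Fin k)} (hd : Disjoint σ τ) : pm σ τ ≠ 0 := fun h => by
  simpa [h] using eval_pm_indicator hd

lemma subset_of_forall_eval_pm_eq_one {σ τ σ₀ τ₀ : Finset (Fin k)} (hd₀ : Disjoint σ₀ τ₀)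
    (h : ∀ w, eval w (pm σ₀ τ₀) = 1 → eval w (pm σ τ) = 1) : σ ⊆ σ₀ ∧ τ ⊆ τ₀ := by
  constructor
  · intro i hi
    by_contra hi₀
    simpa [hi₀] using (eval_pm_eq_one_iff.1 (h _ (eval_pm_indicator hd₀))).1 i hi
  · have hw : eval (fun i => if i ∈ τ₀ then 0 else 1) (pm σ₀ τ₀) = 1 :=
      eval_pm_eq_one_iff.2 ⟨fun i hi => if_neg (disjoint_left.1 hd₀ hi), fun j hj => if_pos hj⟩
    intro j hj
    by_contra hj₀
    simpa [hj₀] using (eval_pm_eq_one_iff.1 (h _ hw)).2 j hj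

lemma isPseudomonomial_X (i : Fin k) : IsPseudomonomial (X i : MvPolynomial (Fin k) (ZMod 2)) :=
  ⟨{i}, ∅, disjoint_empty_right _, by simp [pm]⟩

lemma isPseudomonomial_one_sub_X (i : Fin k) :
    IsPseudomonomial (1 - X i : MvPolynomial (Fin k) (ZMod 2)) :=
  ⟨∅, {i}, disjoint_empty_left _, by simp [pm]⟩

lemma isPseudomonomial_indicatorPM (v : Fin k → ZMod 2) : IsPseudomonomial (indicatorPM v) :=
  ⟨_, _, disjoint_filter_filter_not _ _ _, rfl⟩

lemma IsPseudomonomial.exists_eq_X_or_eq_one_sub_X {p : MvPolynomial (Fin k) (ZMod 2)}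
    (hp : IsPseudomonomial p) (hq : IsPseudomonomial (1 - p)) : ∃ i, p = X i ∨ p = 1 - X i := by
  obtain ⟨σ, τ, hd, rfl⟩ := hp
  obtain ⟨σ', τ', hd', hq⟩ := hq
  have hp_one : ∀ w, eval w (pm σ' τ') ≠ 1 → eval w (pm σ τ) = 1 := by
    intro w hw
    have h := congrArg (eval w) hq
    rw [map_sub, map_one] at h
    exact (by decide : ∀ a b : ZMod 2, 1 - b = a → a ≠ 1 → b = 1) _ _ h hw
  have hp_ne_one : pm σ τ ≠ 1 := fun h => pm_ne_zero hd' (by rw [← hq, h, sub_self])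
  obtain ⟨i, hi⟩ : (σ' ∪ τ').Nonempty := by
    refine nonempty_iff_ne_empty.2 fun h => pm_ne_zero hd ?_
    rw [union_eq_empty] at h
    exact sub_eq_self.1 (hq.trans (by simp [h.1, h.2, pm]))
  -- `1 - p` vanishes on the half-cube where `w i` violates its pattern, so `p` is `1` there.
  rcases mem_union.1 hi with hi | hi
  · obtain ⟨hσ, hτ⟩ := subset_of_forall_eval_pm_eq_one (σ₀ := ∅) (τ₀ := {i}) (by simp)
      fun w hw => hp_one w fun h => zero_ne_one ((eval_pm_eq_one_iff.1 hw).2 i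
        (mem_singleton_self i) ▸ (eval_pm_eq_one_iff.1 h).1 i hi)
    rw [subset_empty] at hσ
    rcases subset_singleton_iff.1 hτ with rfl | rfl
    · exact absurd (by simp [pm, hσ]) hp_ne_one
    · exact ⟨i, .inr (by simp [pm, hσ])⟩
  · obtain ⟨hσ, hτ⟩ := subset_of_forall_eval_pm_eq_one (σ₀ := {i}) (τ₀ := ∅) (by simp)
      fun w hw => hp_one w fun h => zero_ne_one ((eval_pm_eq_one_iff.1 h).2 i hi ▸
        (eval_pm_eq_one_iff.1 hw).1 i (mem_singleton_self i))
    rw [subset_empty] at hτ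
    rcases subset_singleton_iff.1 hσ with rfl | rfl
    · exact absurd (by simp [pm, hτ]) hp_ne_one
    · exact ⟨i, .inl (by simp [pm, hτ])⟩

lemma indicatorPM_eq_prod (v : Fin k → ZMod 2) :
    indicatorPM v = ∏ i, if v i = 1 then X i else 1 - X i := by
  rw [indicatorPM, pm, prod_ite]

lemma pm_eq_sum_indicatorPM {σ τ : Finset (Fin k)} (hd : Disjoint σ τ) :
    pm σ τ = ∑ v ∈ Fintype.piFinset
      (fun i => if i ∈ σ then {1} else if i ∈ τ then {0} else (univ : Finset (ZMod 2))),
      indicatorPM v := by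
  have hfactor : ∀ i,
      ∑ b ∈ (if i ∈ σ then {1} else if i ∈ τ then {0} else (univ : Finset (ZMod 2))),
      (if b = 1 then X i else 1 - X i : MvPolynomial (Fin k) (ZMod 2)) =
        if i ∈ σ ∪ τ then (if i ∈ σ then X i else 1 - X i) else 1 := by
    intro i
    by_cases hσ : i ∈ σ
    · simp [hσ]
    by_cases hτ : i ∈ τ
    · simp [hσ, hτ]
    · rw [if_neg hσ, if_neg hτ, show (univ : Finset (ZMod 2)) = {0, 1} by decide,
        sum_pair zero_ne_one]
      simp [hσ, hτ]
  simp only [indicatorPM_eq_prod]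
  rw [← prod_univ_sum _ fun i b => if b = 1 then X i else 1 - X i, pm_eq_prod hd]
  simp only [hfactor, prod_ite_mem, univ_inter]

lemma pm_dvd_indicatorPM {σ τ : Finset (Fin k)} {v : Fin k → ZMod 2}
    (hv : eval v (pm σ τ) = 1) : pm σ τ ∣ indicatorPM v := by
  obtain ⟨hσ, hτ⟩ := eval_pm_eq_one_iff.1 hv
  refine mul_dvd_mul (prod_dvd_prod_of_subset _ _ _ fun i hi => ?_)
    (prod_dvd_prod_of_subset _ _ _ fun j hj => ?_)
  exacts [by simp [hσ i hi], by simp [hτ j hj]]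

lemma pm_mem_neuralIdeal {σ τ : Finset (Fin k)} (hd : Disjoint σ τ) {C : Set (Fin k → ZMod 2)}
    (hC : ∀ v, eval v (pm σ τ) = 1 → v ∉ C) : pm σ τ ∈ neuralIdeal C := by
  rw [pm_eq_sum_indicatorPM hd]
  refine Ideal.sum_mem _ fun v hv => Ideal.subset_span ⟨v, hC v ?_, rfl⟩
  rw [Fintype.mem_piFinset] at hv
  refine eval_pm_eq_one_iff.2 ⟨fun i hi => ?_, fun j hj => ?_⟩
  · simpa [hi] using hv i
  · simpa [hj, disjoint_right.1 hd hj] using hv j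

lemma neuralIdeal_empty : neuralIdeal (∅ : Set (Fin k → ZMod 2)) = ⊤ := by
  rw [Ideal.eq_top_iff_one, show (1 : MvPolynomial (Fin k) (ZMod 2)) = pm ∅ ∅ by simp [pm]]
  exact pm_mem_neuralIdeal (disjoint_empty_left _) fun _ _ => id

lemma neuralIdeal_setOf_forall_eval_eq_zero {S : Set (MvPolynomial (Fin k) (ZMod 2))}
    (hS : ∀ p ∈ S, IsPseudomonomial p) :
    neuralIdeal {v | ∀ p ∈ S, eval v p = 0} = Ideal.span S := by
  refine le_antisymm (Ideal.span_le.2 ?_) (Ideal.span_le.2 fun p hp => ?_)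
  · rintro _ ⟨v, hv, rfl⟩
    obtain ⟨p, hp, hvp⟩ : ∃ p ∈ S, eval v p ≠ 0 := by simpa using hv
    obtain ⟨σ, τ, -, rfl⟩ := hS p hp
    exact Ideal.mem_of_dvd _ (pm_dvd_indicatorPM ((by decide : ∀ a : ZMod 2, a ≠ 0 → a = 1) _ hvp))
      (Ideal.subset_span hp)
  · obtain ⟨σ, τ, hd, rfl⟩ := hS p hp
    exact pm_mem_neuralIdeal hd fun v hv hvC => by simp [hvC _ hp] at hv

lemma IsPseudomonomial.of_span_singleton_eq_neuralIdeal {q : MvPolynomial (Fin k) (ZMod 2)}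
    {D : Set (Fin k → ZMod 2)} (hD : Ideal.span {q} = neuralIdeal D) (hq : q ≠ 0) :
    IsPseudomonomial q := by
  obtain ⟨w, hw⟩ : ∃ w, w ∉ D := by
    by_contra! hD_univ
    refine hq (Ideal.span_singleton_eq_bot.1 ?_)
    simp [hD, neuralIdeal, hD_univ]
  have hw : indicatorPM w ∈ Ideal.span {q} := hD ▸ Ideal.subset_span ⟨w, hw, rfl⟩
  exact (isPseudomonomial_indicatorPM w).of_dvd (Ideal.mem_span_singleton.1 hw)

end Pseudomonomial

namespace PreservesNeuralIdeals

variable {n m : ℕ} {φ : MvPolynomial (Fin n) (ZMod 2) →+* MvPolynomial (Fin m) (ZMod 2)}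

theorem surjective (hφ : PreservesNeuralIdeals φ) : Function.Surjective φ := by
  obtain ⟨D, hD⟩ := hφ ∅
  rw [neuralIdeal_empty, Submodule.top_coe, Set.image_univ] at hD
  have h_one : (1 : MvPolynomial (Fin m) (ZMod 2)) ∈ (neuralIdeal D : Set _) :=
    hD ▸ ⟨1, map_one φ⟩
  have hD_top : neuralIdeal D = ⊤ := (Ideal.eq_top_iff_one _).2 h_one
  rw [← Set.range_eq_univ, hD, hD_top, Submodule.top_coe]

theorem exists_map_eq (hφ : PreservesNeuralIdeals φ) (C : Set (Fin n → ZMod 2)) :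
    ∃ D, (neuralIdeal C).map φ = neuralIdeal D := by
  obtain ⟨D, hD⟩ := hφ C
  exact ⟨D, SetLike.coe_injective (by rw [Ideal.coe_map_of_surjective hφ.surjective, hD])⟩

theorem isPseudomonomial_map (hφ : PreservesNeuralIdeals φ) {p : MvPolynomial (Fin n) (ZMod 2)}
    (hp : IsPseudomonomial p) (hφp : φ p ≠ 0) : IsPseudomonomial (φ p) := by
  obtain ⟨D, hD⟩ := hφ.exists_map_eq {v | ∀ q ∈ ({p} : Set _), eval v q = 0}
  rw [neuralIdeal_setOf_forall_eval_eq_zero (by simpa using hp), Ideal.map_span,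
    Set.image_singleton] at hD
  exact .of_span_singleton_eq_neuralIdeal hD hφp

theorem map_X_cases (hφ : PreservesNeuralIdeals φ) (i : Fin n) :
    φ (X i) = 0 ∨ φ (X i) = 1 ∨ ∃ j, φ (X i) = X j ∨ φ (X i) = 1 - X j := by
  by_cases h0 : φ (X i) = 0
  · exact .inl h0
  by_cases h1 : φ (X i) = 1
  · exact .inr (.inl h1)
  have hφ_one_sub : φ (1 - X i) = 1 - φ (X i) := by rw [map_sub, map_one]
  have hX := hφ.isPseudomonomial_map (isPseudomonomial_X i) h0
  have hX_compl := hφ.isPseudomonomial_map (isPseudomonomial_one_sub_X i)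
    (by rwa [hφ_one_sub, sub_ne_zero, ne_comm])
  rw [hφ_one_sub] at hX_compl
  exact .inr (.inr (hX.exists_eq_X_or_eq_one_sub_X hX_compl))

/-- If no `φ (X i)` involved `X j`, evaluation at `0` and at the unit vector `e_j` would agree
on the range of `φ`, which contains `X j`. -/
theorem exists_map_X_eq (hφ : PreservesNeuralIdeals φ) (j : Fin m) :
    ∃ i, φ (X i) = X j ∨ φ (X i) = 1 - X j := by
  by_contra! hj
  have heval : (eval 0).comp φ = (eval (Pi.single j 1)).comp φ := by
    refine ringHom_ext (fun r => RingHom.congr_fun (Subsingleton.elim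
      (((eval 0).comp φ).comp C) (((eval (Pi.single j 1)).comp φ).comp C)) r) fun i => ?_
    rcases hφ.map_X_cases i with h | h | ⟨j', h | h⟩
    · simp [h]
    · simp [h]
    all_goals
      have hj' : j' ≠ j := by rintro rfl; simp_all
      simp [h, hj']
  obtain ⟨g, hg⟩ := hφ.surjective (X j)
  simpa [hg] using RingHom.congr_fun heval g

theorem exists_isPseudomonomial_map_eq (hφ : PreservesNeuralIdeals φ)
    {f : MvPolynomial (Fin m) (ZMod 2)} (hf : IsPseudomonomial f) :
    ∃ fhat, IsPseudomonomial fhat ∧ φ fhat = f := by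
  obtain ⟨σ, τ, hd, rfl⟩ := hf
  choose s hs using hφ.exists_map_X_eq
  have hs_inj : Function.Injective s := fun j j' hjj' =>
    eq_of_eq_X_or_eq_one_sub_X (hs j) (hjj' ▸ hs j')
  choose ℓ hℓ hφℓ using fun j => exists_literal_map_eq φ (hs j) (j ∈ σ)
  refine ⟨∏ j ∈ σ ∪ τ, ℓ j, isPseudomonomial_prod hs_inj fun j _ => hℓ j, ?_⟩
  rw [map_prod, pm_eq_prod hd]
  exact prod_congr rfl fun j _ => hφℓ j

theorem exists_image_neuralIdeal_eq (hφ : PreservesNeuralIdeals φ) (D : Set (Fin m → ZMod 2)) :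
    ∃ C : Set (Fin n → ZMod 2), φ '' (neuralIdeal C : Set _) = neuralIdeal D := by
  choose G hG hφG using fun w =>
    hφ.exists_isPseudomonomial_map_eq (isPseudomonomial_indicatorPM w)
  refine ⟨{v | ∀ p ∈ G '' {w | w ∉ D}, eval v p = 0}, ?_⟩
  rw [neuralIdeal_setOf_forall_eval_eq_zero (by rintro _ ⟨w, -, rfl⟩; exact hG w),
    ← Ideal.coe_map_of_surjective hφ.surjective, Ideal.map_span, ← Set.image_comp,
    show ⇑φ ∘ G = indicatorPM from funext hφG, neuralIdeal]

end PreservesNeuralIdeals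

theorem preimage_pseudomonomial_and_ideal {n m : ℕ}
    (φ : MvPolynomial (Fin n) (ZMod 2) →+* MvPolynomial (Fin m) (ZMod 2))
    (h : PreservesNeuralIdeals φ) :
    (∀ f : MvPolynomial (Fin m) (ZMod 2), IsPseudomonomial f →
      ∃ fhat : MvPolynomial (Fin n) (ZMod 2), IsPseudomonomial fhat ∧ φ fhat = f) ∧
    ∀ D : Set (Fin m → ZMod 2), ∃ C : Set (Fin n → ZMod 2),
      φ '' (neuralIdeal C : Set (MvPolynomial (Fin n) (ZMod 2))) =
        (neuralIdeal D : Set (MvPolynomial (Fin m) (ZMod 2))) :=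
  ⟨fun _ hf => h.exists_isPseudomonomial_map_eq hf, h.exists_image_neuralIdeal_eq⟩
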